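/- For every (x0, alpha0) in the extended Pareto critical manifold M (assuming rank D F-tilde = n on M so that M is a C^1 manifold), the projection onto the x-coordinates of the tangent space T_{(x0,alpha0)} M is contained in the tangent cone Tan(P_int, x0). -/

import Mathlib

/-!
The implicit function theorem applies to `F̃` at `(x₀, α₀)` because the rank condition makes
`D F̃(x₀, α₀)` onto. Hence every `w ∈ ker D F̃(x₀, α₀)` is the velocity at `0` of a curve `γ` in the
zero set of `F̃` through `(x₀, α₀)`. As the open simplex is open, `γ t ∈ M` for small `t`, so the
`x`-component of `γ t` lies in `P_int`, and its secants `γ t - x₀` for `t ↓ 0` point, after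
normalization, in the direction of `w_x`.
-/

noncomputable def grad (n : ℕ) (g : (Fin n → ℝ) → ℝ) (x : Fin n → ℝ) : Fin n → ℝ :=
  fun j => fderiv ℝ g x (Pi.single j 1)

noncomputable def Ftilde (n K : ℕ) (f : Fin (K + 1) → (Fin n → ℝ) → ℝ)
    (p : (Fin n → ℝ) × (Fin K → ℝ)) : Fin n → ℝ :=
  (∑ i : Fin K, p.2 i •
      (grad n (f i.castSucc) p.1 - grad n (f (Fin.last K)) p.1))
    + grad n (f (Fin.last K)) p.1

def openSimplex (K : ℕ) : Set (Fin K → ℝ) := {α | (∀ i, 0 < α i) ∧ ∑ i, α i < 1}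

def ParetoCriticalInt (n K : ℕ) (f : Fin (K + 1) → (Fin n → ℝ) → ℝ) : Set (Fin n → ℝ) :=
  {x | ∃ α ∈ openSimplex K, Ftilde n K f (x, α) = 0}

def Tan {E : Type*} [NormedAddCommGroup E] [NormedSpace ℝ E] (Y : Set E) (x : E) :
    Set E :=
  {v | v = 0 ∨ ∃ u : ℕ → E, (∀ i, u i ≠ 0) ∧
    Filter.Tendsto u Filter.atTop (nhds 0) ∧ (∀ i, x + u i ∈ Y) ∧
    Filter.Tendsto (fun i => ‖u i‖⁻¹ • u i) Filter.atTop (nhds (‖v‖⁻¹ • v))}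


open Filter Topology Set

theorem LinearMap.range_eq_top_of_rank_eq {K V W : Type*} [DivisionRing K] [AddCommGroup V]
    [Module K V] [AddCommGroup W] [Module K W] [FiniteDimensional K W] (L : V →ₗ[K] W)
    (h : L.rank = Module.rank K W) : L.range = ⊤ :=
  Submodule.eq_top_of_finrank_eq (congrArg Cardinal.toNat h)

section LevelSet

variable {𝕜 E F : Type*} [NontriviallyNormedField 𝕜] [CompleteSpace 𝕜]
  [NormedAddCommGroup E] [NormedSpace 𝕜 E] [CompleteSpace E]
  [NormedAddCommGroup F] [NormedSpace 𝕜 F] [FiniteDimensional 𝕜 F]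

theorem HasStrictFDerivAt.exists_curve_mem_levelSet {f : E → F} {f' : E →L[𝕜] F} {a : E}
    (hf : HasStrictFDerivAt f f' a) (hf' : f'.range = ⊤) {v : E} (hv : f' v = 0) :
    ∃ γ : 𝕜 → E, γ 0 = a ∧ HasDerivAt γ v 0 ∧ ∀ᶠ t in 𝓝 0, f (γ t) = f a := by
  let v' : f'.ker := ⟨v, hv⟩
  have hline : Tendsto (fun t : 𝕜 => (f a, t • v')) (𝓝 0) (𝓝 (f a, 0)) := by
    refine tendsto_const_nhds.prodMk_nhds ?_
    simpa using (tendsto_id (x := 𝓝 (0 : 𝕜))).smul_const v'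
  refine ⟨fun t => hf.implicitFunction f f' hf' (f a) (t • v'), by simp, ?_,
    hline.eventually (hf.map_implicitFunction_eq hf')⟩
  have hderiv := (hf.to_implicitFunction hf').hasFDerivAt.comp_hasDerivAt_of_eq (0 : 𝕜)
    ((hasDerivAt_id (0 : 𝕜)).smul_const v') (zero_smul 𝕜 v').symm
  rwa [one_smul] at hderiv

end LevelSet

section TangentCone

variable {E : Type*} [NormedAddCommGroup E] [NormedSpace ℝ E]

theorem mem_Tan_of_tendsto {α : Type*} {l : Filter α} [l.NeBot] [l.IsCountablyGenerated]
    {Y : Set E} {x v : E} {d : α → E} (hd : Tendsto d l (𝓝 0))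
    (hdY : ∀ᶠ i in l, d i ≠ 0 ∧ x + d i ∈ Y)
    (hdir : Tendsto (fun i => ‖d i‖⁻¹ • d i) l (𝓝 (‖v‖⁻¹ • v))) : v ∈ Tan Y x := by
  obtain ⟨s, hs, hsY⟩ := exists_seq_forall_of_frequently hdY.frequently
  exact Or.inr ⟨d ∘ s, fun i => (hsY i).1, hd.comp hs, fun i => (hsY i).2, hdir.comp hs⟩

theorem mem_Tan_of_hasDerivWithinAt {Y : Set E} {γ : ℝ → E} {v : E}
    (hγ : HasDerivWithinAt γ v (Ioi 0) 0) (hY : ∀ᶠ t in 𝓝[>] 0, γ t ∈ Y) : v ∈ Tan Y (γ 0) := by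
  rcases eq_or_ne v 0 with rfl | hv
  · exact Or.inl rfl
  have hslope : Tendsto (fun t => t⁻¹ • (γ t - γ 0)) (𝓝[>] 0) (𝓝 v) := by
    refine ((hasDerivWithinAt_iff_tendsto_slope' (lt_irrefl 0)).1 hγ).congr fun t => ?_
    rw [slope_def_module, sub_zero]
  have hd : Tendsto (fun t => γ t - γ 0) (𝓝[>] 0) (𝓝 0) := by
    simpa using hγ.continuousWithinAt.tendsto.sub_const (γ 0)
  have hnormalize : ∀ᶠ t in 𝓝[>] (0 : ℝ),
      ‖t⁻¹ • (γ t - γ 0)‖⁻¹ • (t⁻¹ • (γ t - γ 0)) = ‖γ t - γ 0‖⁻¹ • (γ t - γ 0) := by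
    filter_upwards [self_mem_nhdsWithin] with t (ht : 0 < t)
    rw [norm_smul, Real.norm_of_nonneg (inv_nonneg.2 ht.le), mul_inv, inv_inv, smul_smul,
      mul_right_comm, mul_inv_cancel₀ ht.ne', one_mul]
  have hnormalize_cont : ContinuousAt (fun y : E => ‖y‖⁻¹ • y) v :=
    (continuousAt_id.norm.inv₀ (norm_ne_zero_iff.2 hv)).smul continuousAt_id
  refine mem_Tan_of_tendsto hd ?_ ((hnormalize_cont.tendsto.comp hslope).congr' hnormalize)
  filter_upwards [hslope.eventually_ne hv, hY] with t hne hγY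
  exact ⟨fun h => hne (by simp [h]), by rwa [add_sub_cancel]⟩

end TangentCone

theorem isOpen_openSimplex (K : ℕ) : IsOpen (openSimplex K) := by
  rw [openSimplex, ofPred_and, ofPred_forall]
  exact (isOpen_iInter_of_finite fun i => isOpen_lt continuous_const (continuous_apply i)).inter
    (isOpen_lt (continuous_finsetSum _ fun i _ => continuous_apply i) continuous_const)

theorem contDiff_grad {n : ℕ} {g : (Fin n → ℝ) → ℝ} (hg : ContDiff ℝ 2 g) :
    ContDiff ℝ 1 (grad n g) :=
  contDiff_pi.2 fun _ => (hg.fderiv_right (by norm_num)).clm_apply contDiff_const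

theorem contDiff_Ftilde {n K : ℕ} {f : Fin (K + 1) → (Fin n → ℝ) → ℝ}
    (hf : ∀ i, ContDiff ℝ 2 (f i)) : ContDiff ℝ 1 (Ftilde n K f) := by
  have hgrad (i) : ContDiff ℝ 1 fun p : (Fin n → ℝ) × (Fin K → ℝ) => grad n (f i) p.1 :=
    (contDiff_grad (hf i)).comp contDiff_fst
  exact .add (.sum fun i _ =>
    ((contDiff_apply ℝ ℝ i).comp contDiff_snd).smul ((hgrad _).sub (hgrad _))) (hgrad _)

theorem proj_tangent_space_subset_tangent_cone_general (n K : ℕ)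
    (f : Fin (K + 1) → (Fin n → ℝ) → ℝ) (hf : ∀ i, ContDiff ℝ 2 (f i))
    (M : Set ((Fin n → ℝ) × (Fin K → ℝ)))
    (hM : M = {p | p.2 ∈ openSimplex K ∧ Ftilde n K f p = 0})
    (hrank : ∀ p ∈ M,
      LinearMap.rank ((fderiv ℝ (Ftilde n K f) p :
        ((Fin n → ℝ) × (Fin K → ℝ)) →ₗ[ℝ] (Fin n → ℝ))) = (n : Cardinal)) :
    ∀ p ∈ M,
      (fun q : (Fin n → ℝ) × (Fin K → ℝ) => q.1) ''
          (LinearMap.ker (fderiv ℝ (Ftilde n K f) p :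
            ((Fin n → ℝ) × (Fin K → ℝ)) →ₗ[ℝ] (Fin n → ℝ)) : Set ((Fin n → ℝ) × (Fin K → ℝ)))
        ⊆ Tan (ParetoCriticalInt n K f) p.1 := by
  rintro p hp _ ⟨w, hw, rfl⟩
  have hsurj : (fderiv ℝ (Ftilde n K f) p).range = ⊤ :=
    LinearMap.range_eq_top_of_rank_eq _ ((hrank p hp).trans (rank_fin_fun n).symm)
  obtain ⟨hα, hF⟩ : p.2 ∈ openSimplex K ∧ Ftilde n K f p = 0 := by rwa [hM] at hp
  obtain ⟨γ, rfl, hγ, hγF⟩ := ((contDiff_Ftilde hf).contDiffAt.hasStrictFDerivAt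
    one_ne_zero).exists_curve_mem_levelSet hsurj hw
  have hγα : ∀ᶠ t in 𝓝 0, (γ t).2 ∈ openSimplex K :=
    (continuous_snd.continuousAt.comp hγ.continuousAt).eventually_mem
      ((isOpen_openSimplex K).mem_nhds hα)
  have hγ₁ : HasDerivAt (fun t => (γ t).1) w.1 0 := by
    simpa using hγ.hasFDerivAt.fst.hasDerivAt
  refine mem_Tan_of_hasDerivWithinAt hγ₁.hasDerivWithinAt ?_
  filter_upwards [nhdsWithin_le_nhds (hγF.and hγα)] with t ⟨htF, htα⟩
  exact ⟨(γ t).2, htα, htF.trans hF⟩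

/-- the projection onto the `x`-coordinates of the tangent space
`T_{(x₀,α₀)} M = ker D F̃(x₀,α₀)` is contained in the tangent cone of `P_int` at `x₀`. -/
theorem proj_tangent_space_subset_tangent_cone (n K : ℕ) (hK : 0 < K)
    (f : Fin (K + 1) → (Fin n → ℝ) → ℝ) (hf : ∀ i, ContDiff ℝ 2 (f i))
    (M : Set ((Fin n → ℝ) × (Fin K → ℝ)))
    (hM : M = {p | p.2 ∈ openSimplex K ∧ Ftilde n K f p = 0})
    (hrank : ∀ p ∈ M,
      LinearMap.rank ((fderiv ℝ (Ftilde n K f) p :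
        ((Fin n → ℝ) × (Fin K → ℝ)) →ₗ[ℝ] (Fin n → ℝ))) = (n : Cardinal)) :
    ∀ p ∈ M,
      (fun q : (Fin n → ℝ) × (Fin K → ℝ) => q.1) ''
          (LinearMap.ker (fderiv ℝ (Ftilde n K f) p :
            ((Fin n → ℝ) × (Fin K → ℝ)) →ₗ[ℝ] (Fin n → ℝ)) : Set ((Fin n → ℝ) × (Fin K → ℝ)))
        ⊆ Tan (ParetoCriticalInt n K f) p.1 :=
  proj_tangent_space_subset_tangent_cone_general n K f hf M hM hrank
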